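/- Let N ≥ 3 and N' = N/(N−1). Let ψ : [0,∞) → ℝ be continuous with ψ(0) = 0, ψ(r) > 0 for r > 0, and such that ψ(r) ≥ r and r·ψ'(r) ≥ ψ(r) for all r > 0 (with ψ differentiable on (0,∞)); define J(ϱ) = ( ψ( (N ϱ/ω_N)^{1/N} ) / (N ϱ/ω_N)^{1/N} )^{N−1} for ϱ > 0. Let φ : (0,∞) → [0,∞) be nonincreasing and locally absolutely continuous with lim_{ϱ→∞} φ(ϱ) = 0 and ∫₀^∞ φ'(ϱ)² ϱ^{2/N'} J(ϱ) dϱ < ∞. Then lim_{ϱ→∞} φ(ϱ)² · ϱ^{1−2/N} · J(ϱ) = 0. -/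

import Mathlib

open MeasureTheory

/-- Surface area of the unit sphere `S^{N-1} ⊂ ℝ^N`. -/
noncomputable def omegaN (N : ℕ) : ℝ :=
  2 * Real.pi ^ ((N : ℝ) / 2) / Real.Gamma ((N : ℝ) / 2)

/-- The Jacobian distortion factor `J(ϱ) = (ψ(r)/r)^{N-1}` with `r = (Nϱ/ω_N)^{1/N}`. -/
noncomputable def Jfun (N : ℕ) (ψ : ℝ → ℝ) (t : ℝ) : ℝ :=
  if t = 0 then 1 else
    (ψ (((N : ℝ) * t / omegaN N) ^ ((1:ℝ) / (N : ℝ))) /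
      (((N : ℝ) * t / omegaN N) ^ ((1:ℝ) / (N : ℝ)))) ^ (N - 1)

/-- The Hölder conjugate `N' = N/(N-1)`. -/
noncomputable def Nprime (N : ℕ) : ℝ := (N : ℝ) / ((N : ℝ) - 1)

open Set Filter Topology

/-!
Since `φ → 0`, `φ x = -∫_x^∞ φ'`. Cauchy–Schwarz against the weight `w t = t ^ p * J t`,
`p = 2/N' = 2 - 2/N > 1`, together with `J t ≥ J x` for `t ≥ x` (as `ψ r / r` is
nondecreasing), gives `φ x ^ 2 ≤ ε x * x ^ (1 - p) / ((p - 1) * J x)`, where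
`ε x = ∫_x^∞ φ' ^ 2 * w` is the tail of a convergent integral. Cauchy–Schwarz is used in the
form `|φ'| ≤ φ' ^ 2 * w / (2λ) + λ / (2w)`, optimised over `λ > 0` after integrating, which
needs no a priori integrability of `φ'`.
-/

lemma tendsto_setIntegral_Ioi_atTop {g : ℝ → ℝ} {a : ℝ} (hg : IntegrableOn g (Ioi a)) :
    Tendsto (fun x => ∫ t in Ioi x, g t) atTop (𝓝 0) := by
  have hempty : ⋂ x : ℝ, Ioi x = ∅ :=
    eq_empty_of_forall_notMem fun t ht => lt_irrefl t (mem_iInter.1 ht t)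
  simpa [hempty] using tendsto_setIntegral_of_antitone (fun _ => measurableSet_Ioi)
    (fun _ _ hxy => Ioi_subset_Ioi hxy) ⟨a, hg⟩

lemma abs_le_sq_mul_div_add_div (a : ℝ) {w l : ℝ} (hw : 0 < w) (hl : 0 < l) :
    |a| ≤ a ^ 2 * w / (2 * l) + l / (2 * w) := by
  rw [div_add_div _ _ (by positivity) (by positivity), le_div_iff₀ (by positivity)]
  have hsq := sq_nonneg (|a| * w - l)
  rw [sub_sq, mul_pow, sq_abs] at hsq
  nlinarith

lemma sq_le_mul_of_forall_le_div_add_mul {c e A : ℝ} (hc : 0 ≤ c) (he : 0 ≤ e) (hA : 0 < A)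
    (h : ∀ l, 0 < l → c ≤ e / (2 * l) + l * A / 2) : c ^ 2 ≤ e * A := by
  rcases hc.eq_or_lt with rfl | hc
  · simpa using mul_nonneg he hA.le
  have hl := h (c / A) (by positivity)
  have hsimp : e / (2 * (c / A)) = e * A / (2 * c) := by field_simp
  rw [hsimp, div_mul_cancel₀ _ hA.ne'] at hl
  calc c ^ 2 = c / 2 * (2 * c) := by ring
    _ ≤ e * A := (le_div_iff₀ (by positivity)).1 (by linarith)

lemma abs_le_setIntegral_Ioi {φ f B : ℝ → ℝ} {x : ℝ}
    (hprim : ∀ b, x ≤ b → φ b - φ x = ∫ t in x..b, f t)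
    (hlim : Tendsto φ atTop (𝓝 0)) (hB : IntegrableOn B (Ioi x))
    (hfB : ∀ t, x < t → |f t| ≤ B t) :
    |φ x| ≤ ∫ t in Ioi x, B t := by
  have hbound : ∀ b, x ≤ b → |φ x| ≤ |φ b| + ∫ t in Ioi x, B t := by
    intro b hxb
    have hBb : IntervalIntegrable B volume x b :=
      (intervalIntegrable_iff_integrableOn_Ioc_of_le hxb).2 (hB.mono_set Ioc_subset_Ioi_self)
    have hnorm : |∫ t in x..b, f t| ≤ ∫ t in x..b, B t :=
      intervalIntegral.norm_integral_le_of_norm_le (f := f) hxb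
        (ae_of_all _ fun t ht => hfB t ht.1) hBb
    have hmono : ∫ t in x..b, B t ≤ ∫ t in Ioi x, B t := by
      rw [intervalIntegral.integral_of_le hxb]
      refine setIntegral_mono_set hB ?_ (ae_of_all _ Ioc_subset_Ioi_self)
      exact (ae_restrict_iff' measurableSet_Ioi).2
        (ae_of_all _ fun t ht => (abs_nonneg _).trans (hfB t ht))
    calc |φ x| = |φ b - (φ b - φ x)| := by rw [sub_sub_cancel]
      _ ≤ |φ b| + |φ b - φ x| := abs_sub _ _
      _ ≤ |φ b| + ∫ t in Ioi x, B t := by rw [hprim b hxb]; linarith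
  have hlim' := hlim.abs.add_const (∫ t in Ioi x, B t)
  rw [abs_zero, zero_add] at hlim'
  exact ge_of_tendsto hlim' ((eventually_ge_atTop x).mono hbound)

lemma abs_le_sq_mul_rpow_mul_div_add (a : ℝ) {t p j₀ j l : ℝ} (ht : 0 < t) (hj₀ : 0 < j₀)
    (hj : j₀ ≤ j) (hl : 0 < l) :
    |a| ≤ a ^ 2 * t ^ p * j / (2 * l) + l / (2 * j₀) * t ^ (-p) := by
  have htp := Real.rpow_pos_of_pos ht p
  calc |a| ≤ a ^ 2 * (t ^ p * j) / (2 * l) + l / (2 * (t ^ p * j)) :=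
        abs_le_sq_mul_div_add_div a (mul_pos htp (hj₀.trans_le hj)) hl
    _ ≤ a ^ 2 * (t ^ p * j) / (2 * l) + l / (2 * (t ^ p * j₀)) := by gcongr
    _ = a ^ 2 * t ^ p * j / (2 * l) + l / (2 * j₀) * t ^ (-p) := by
        rw [Real.rpow_neg ht.le]
        field_simp

lemma sq_mul_rpow_mul_le_setIntegral_Ioi {φ f J : ℝ → ℝ} {p x : ℝ} (hp : 1 < p)
    (hx : 0 < x) (hJpos : 0 < J x) (hJmono : ∀ t, x < t → J x ≤ J t)
    (hprim : ∀ b, x ≤ b → φ b - φ x = ∫ t in x..b, f t) (hlim : Tendsto φ atTop (𝓝 0))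
    (hg : IntegrableOn (fun t => f t ^ 2 * t ^ p * J t) (Ioi x)) :
    φ x ^ 2 * x ^ (p - 1) * J x ≤ (∫ t in Ioi x, f t ^ 2 * t ^ p * J t) / (p - 1) := by
  set ε := ∫ t in Ioi x, f t ^ 2 * t ^ p * J t
  set A := x ^ (1 - p) / ((p - 1) * J x)
  have hp1 : 0 < p - 1 := sub_pos.2 hp
  have hpow : IntegrableOn (fun t : ℝ => t ^ (-p)) (Ioi x) :=
    integrableOn_Ioi_rpow_of_lt (by linarith) hx
  have hε : 0 ≤ ε := setIntegral_nonneg measurableSet_Ioi fun t ht => by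
    have := hJpos.trans_le (hJmono t ht)
    have := Real.rpow_pos_of_pos (hx.trans ht) p
    positivity
  have hφ : φ x ^ 2 ≤ ε * A := by
    rw [← sq_abs]
    refine sq_le_mul_of_forall_le_div_add_mul (abs_nonneg _) hε (by positivity) fun l hl => ?_
    calc |φ x| ≤ ∫ t in Ioi x, (f t ^ 2 * t ^ p * J t / (2 * l) + l / (2 * J x) * t ^ (-p)) :=
          abs_le_setIntegral_Ioi hprim hlim ((hg.div_const _).fun_add (hpow.const_mul _))
            fun t ht => abs_le_sq_mul_rpow_mul_div_add _ (hx.trans ht) hJpos (hJmono t ht) hl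
      _ = ε / (2 * l) + l * A / 2 := by
          rw [integral_add (hg.div_const _) (hpow.const_mul _), integral_div, integral_const_mul,
            integral_Ioi_rpow_of_lt (by linarith) hx, neg_add_eq_sub, neg_div, ← div_neg,
            neg_sub]
          simp only [A, ε]
          field_simp
  have hxx : x ^ (1 - p) * x ^ (p - 1) = 1 := by
    rw [← Real.rpow_add hx, sub_add_sub_cancel', sub_self, Real.rpow_zero]
  calc φ x ^ 2 * x ^ (p - 1) * J x ≤ ε * A * x ^ (p - 1) * J x := by gcongr
    _ = ε / (p - 1) := by
      simp only [A]
      field_simp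
      linear_combination ε * hxx

theorem tendsto_sq_mul_rpow_mul_atTop {φ f J : ℝ → ℝ} {p : ℝ} (hp : 1 < p)
    (hJpos : ∀ t, 0 < t → 0 < J t) (hJmono : MonotoneOn J (Ioi 0))
    (hprim : ∀ a b, 0 < a → a ≤ b → φ b - φ a = ∫ t in a..b, f t)
    (hlim : Tendsto φ atTop (𝓝 0))
    (hfin : IntegrableOn (fun t => f t ^ 2 * t ^ p * J t) (Ioi 0)) :
    Tendsto (fun x => φ x ^ 2 * x ^ (p - 1) * J x) atTop (𝓝 0) := by
  have htail := (tendsto_setIntegral_Ioi_atTop hfin).div_const (p - 1)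
  rw [zero_div] at htail
  refine squeeze_zero' ?_ ?_ htail
  · filter_upwards [eventually_gt_atTop 0] with x hx
    have := hJpos x hx
    have := Real.rpow_pos_of_pos hx (p - 1)
    positivity
  · filter_upwards [eventually_gt_atTop 0] with x hx
    exact sq_mul_rpow_mul_le_setIntegral_Ioi hp hx (hJpos x hx)
      (fun t ht => hJmono hx (hx.trans ht) ht.le) (fun b => hprim x b hx) hlim
      (hfin.mono_set (Ioi_subset_Ioi hx.le))

lemma monotoneOn_div_self_of_le_mul_deriv {ψ : ℝ → ℝ}
    (hdiff : ∀ r, 0 < r → DifferentiableAt ℝ ψ r)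
    (hψ : ∀ r, 0 < r → ψ r ≤ r * deriv ψ r) :
    MonotoneOn (fun r => ψ r / r) (Ioi 0) := by
  have hquot : ∀ r ∈ Ioi (0 : ℝ),
      HasDerivAt (fun r => ψ r / r) ((deriv ψ r * r - ψ r) / r ^ 2) r :=
    fun r hr => ((hdiff r hr).hasDerivAt.div (hasDerivAt_id' r) hr.ne').congr_deriv (by ring)
  refine monotoneOn_of_deriv_nonneg (convex_Ioi 0) ?_ ?_ ?_
  · exact HasDerivAt.continuousOn hquot
  · rw [interior_Ioi]
    exact fun r hr => (hquot r hr).differentiableAt.differentiableWithinAt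
  · rw [interior_Ioi]
    intro r hr
    rw [(hquot r hr).deriv]
    have := hψ r hr
    exact div_nonneg (by linarith) (sq_nonneg r)

lemma omegaN_pos {N : ℕ} (hN : 0 < N) : 0 < omegaN N := by
  have := Real.Gamma_pos_of_pos (by positivity : (0 : ℝ) < N / 2)
  unfold omegaN
  positivity

lemma Jfun_pos {N : ℕ} (hN : 0 < N) {ψ : ℝ → ℝ} (hpos : ∀ r, 0 < r → 0 < ψ r)
    {t : ℝ} (ht : 0 < t) : 0 < Jfun N ψ t := by
  have hr : 0 < ((N : ℝ) * t / omegaN N) ^ ((1 : ℝ) / N) := by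
    have := omegaN_pos hN
    positivity
  rw [Jfun, if_neg ht.ne']
  exact pow_pos (div_pos (hpos _ hr) hr) _

lemma Jfun_monotoneOn {N : ℕ} (hN : 0 < N) {ψ : ℝ → ℝ}
    (hnonneg : ∀ r, 0 < r → 0 ≤ ψ r) (hψ : MonotoneOn (fun r => ψ r / r) (Ioi 0)) :
    MonotoneOn (Jfun N ψ) (Ioi 0) := by
  intro s (hs : 0 < s) t (ht : 0 < t) hst
  have hω := omegaN_pos hN
  have hrs : 0 < ((N : ℝ) * s / omegaN N) ^ ((1 : ℝ) / N) := by positivity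
  have hrst : ((N : ℝ) * s / omegaN N) ^ ((1 : ℝ) / N)
      ≤ ((N : ℝ) * t / omegaN N) ^ ((1 : ℝ) / N) := by gcongr
  rw [Jfun, Jfun, if_neg hs.ne', if_neg ht.ne']
  exact pow_le_pow_left₀ (div_nonneg (hnonneg _ hrs) hrs.le)
    (hψ hrs (hrs.trans_le hrst) hrst) _

lemma two_div_Nprime {N : ℕ} (hN : N ≠ 0) : 2 / Nprime N = 2 - 2 / N := by
  have : (N : ℝ) ≠ 0 := by exact_mod_cast hN
  rw [Nprime]
  field_simp

theorem stmt_11_general (N : ℕ) (hN : 3 ≤ N) (ψ : ℝ → ℝ)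
    (hpos : ∀ r : ℝ, 0 < r → 0 < ψ r)
    (hdiff : ∀ r : ℝ, 0 < r → DifferentiableAt ℝ ψ r)
    (hlog : ∀ r : ℝ, 0 < r → ψ r ≤ r * deriv ψ r)
    (φ : ℝ → ℝ)
    (hac : ∀ a b : ℝ, 0 < a → a ≤ b → φ b - φ a = ∫ t in a..b, deriv φ t)
    (hlim : Filter.Tendsto φ Filter.atTop (nhds 0))
    (hfin : IntegrableOn
      (fun ϱ => (deriv φ ϱ) ^ 2 * ϱ ^ ((2:ℝ) / Nprime N) * Jfun N ψ ϱ)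
      (Set.Ioi 0)) :
    Filter.Tendsto
      (fun ϱ : ℝ => (φ ϱ) ^ 2 * ϱ ^ ((1:ℝ) - 2 / (N : ℝ)) * Jfun N ψ ϱ)
      Filter.atTop (nhds 0) := by
  have hN0 : 0 < N := by omega
  have hp : 1 < 2 / Nprime N := by
    have : (3 : ℝ) ≤ N := by exact_mod_cast hN
    rw [two_div_Nprime hN0.ne', lt_sub_comm, div_lt_iff₀ (by positivity)]
    linarith
  have hJmono := Jfun_monotoneOn hN0 (fun r hr => (hpos r hr).le)
    (monotoneOn_div_self_of_le_mul_deriv hdiff hlog)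
  convert tendsto_sq_mul_rpow_mul_atTop hp (fun t => Jfun_pos hN0 hpos) hJmono hac hlim hfin
    using 4
  rw [two_div_Nprime hN0.ne']
  ring_nf

/-- Boundary decay at infinity:
`φ(ϱ)² ϱ^{1-2/N} J(ϱ) → 0` as `ϱ → ∞`. -/
theorem stmt_11 (N : ℕ) (hN : 3 ≤ N) (ψ : ℝ → ℝ)
    (hψc : Continuous ψ) (h0 : ψ 0 = 0)
    (hpos : ∀ r : ℝ, 0 < r → 0 < ψ r)
    (hdiff : ∀ r : ℝ, 0 < r → DifferentiableAt ℝ ψ r)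
    (hgeq : ∀ r : ℝ, 0 < r → r ≤ ψ r)
    (hlog : ∀ r : ℝ, 0 < r → ψ r ≤ r * deriv ψ r)
    (φ : ℝ → ℝ) (hφ0 : ∀ ϱ : ℝ, 0 < ϱ → 0 ≤ φ ϱ)
    (hanti : AntitoneOn φ (Set.Ioi 0))
    (hac : ∀ a b : ℝ, 0 < a → a ≤ b → φ b - φ a = ∫ t in a..b, deriv φ t)
    (hlim : Filter.Tendsto φ Filter.atTop (nhds 0))
    (hfin : IntegrableOn
      (fun ϱ => (deriv φ ϱ) ^ 2 * ϱ ^ ((2:ℝ) / Nprime N) * Jfun N ψ ϱ)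
      (Set.Ioi 0)) :
    Filter.Tendsto
      (fun ϱ : ℝ => (φ ϱ) ^ 2 * ϱ ^ ((1:ℝ) - 2 / (N : ℝ)) * Jfun N ψ ϱ)
      Filter.atTop (nhds 0) :=
  stmt_11_general N hN ψ hpos hdiff hlog φ hac hlim hfin
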